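/- arXiv:2102.12611 — 4 statements merged into one kernel-verified Lean document; each statement's English description precedes it below -/
import Mathlib

section
/- Let S be a finite nonempty set, let T ≥ 1, let X₀, X₁, …, X_T be distribution vectors on S, and let H₀, H₁, …, H_{T−1} be row-stochastic matrices on S. For 0 ≤ i ≤ t ≤ T define H_{i:t} = H_i H_{i+1} ⋯ H_{t−1} (with H_{i:i} the identity matrix), and for 1 ≤ i ≤ T define B_i = Σ_{t=1}^{i} X_t + Σ_{t=i+1}^{T} (H_{i:t})ᵀ X_i, and B₀ = Σ_{t=1}^{T} (H_{0:t})ᵀ X₀. Then for every 1 ≤ i ≤ T, B_i − B_{i−1} = Σ_{t=i}^{T} (H_{i:t})ᵀ (X_i − H_{i−1}ᵀ X_{i−1}). -/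
/-!
Both `B i` and `B (i - 1)` contain the prefix `Σ_{t<i} X t`. After absorbing `X i` into the tail of
`B i` as the `t = i` term (`H_{i:i} = 1`), and rewriting `H_{i-1:t} = H_{i-1} H_{i:t}` in the tail
of `B (i - 1)`, the two tails run over the same range `i ≤ t ≤ T` and subtract termwise.
-/

open Finset Matrix BigOperators

/-- The partial product `H_{i:t} = H i * H (i+1) * ⋯ * H (t-1)`, with `H_{i:i} = 1`. -/
def prodSlice {S : Type*} [Fintype S] [DecidableEq S]
    (H : ℕ → Matrix S S ℝ) (i t : ℕ) : Matrix S S ℝ :=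
  ((List.range (t - i)).map (fun j => H (i + j))).prod

section prodSlice

variable {S : Type*} [Fintype S] [DecidableEq S] (H : ℕ → Matrix S S ℝ)

@[simp]
lemma prodSlice_self (i : ℕ) : prodSlice H i i = 1 := by
  simp [prodSlice]

lemma prodSlice_eq_mul_prodSlice_succ {i t : ℕ} (hit : i < t) :
    prodSlice H i t = H i * prodSlice H (i + 1) t := by
  obtain ⟨n, rfl⟩ := Nat.exists_eq_add_of_lt hit
  simp only [prodSlice, show i + n + 1 - i = n + 1 by omega, show i + n + 1 - (i + 1) = n by omega,
    List.range_succ_eq_map, List.map_cons, List.map_map, List.prod_cons, Nat.add_zero]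
  congr 3
  ext j : 1
  simp only [Function.comp, Nat.succ_eq_add_one]
  ring_nf

lemma prodSlice_transpose_mulVec {i t : ℕ} (hit : i < t) (v : S → ℝ) :
    (prodSlice H i t)ᵀ *ᵥ v = (prodSlice H (i + 1) t)ᵀ *ᵥ ((H i)ᵀ *ᵥ v) := by
  rw [mulVec_mulVec, ← transpose_mul, prodSlice_eq_mul_prodSlice_succ H hit]

lemma add_sum_Icc_succ_prodSlice_transpose_mulVec {i T : ℕ} (hiT : i ≤ T) (v : S → ℝ) :
    v + ∑ t ∈ Icc (i + 1) T, (prodSlice H i t)ᵀ *ᵥ v = ∑ t ∈ Icc i T, (prodSlice H i t)ᵀ *ᵥ v := by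
  rw [← insert_Icc_add_one_left_eq_Icc hiT, sum_insert (by simp), prodSlice_self, transpose_one,
    one_mulVec]

end prodSlice

theorem doob_martingale_difference_general {S : Type*} [Fintype S] [DecidableEq S]
    (T : ℕ)
    (X : ℕ → S → ℝ)
    (H : ℕ → Matrix S S ℝ)
    (B : ℕ → S → ℝ)
    (hB0 : B 0 = ∑ t ∈ Finset.Icc 1 T, ((prodSlice H 0 t)ᵀ).mulVec (X 0))
    (hBi : ∀ i, 1 ≤ i → i ≤ T →
      B i = (∑ t ∈ Finset.Icc 1 i, X t)
        + ∑ t ∈ Finset.Icc (i + 1) T, ((prodSlice H i t)ᵀ).mulVec (X i)) :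
    ∀ i, 1 ≤ i → i ≤ T →
      B i - B (i - 1)
        = ∑ t ∈ Finset.Icc i T,
            ((prodSlice H i t)ᵀ).mulVec (X i - (H (i - 1))ᵀ.mulVec (X (i - 1))) := by
  intro i hi hiT
  obtain ⟨j, rfl⟩ := Nat.exists_eq_add_of_le' hi
  rw [Nat.add_sub_cancel]
  have hB_prev : B j = ∑ t ∈ Icc 1 j, X t + ∑ t ∈ Icc (j + 1) T, (prodSlice H j t)ᵀ *ᵥ X j := by
    rcases Nat.eq_zero_or_pos j with rfl | hj
    · simpa using hB0
    · exact hBi j hj (by omega)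
  have hB_cur : B (j + 1) =
      ∑ t ∈ Icc 1 j, X t + ∑ t ∈ Icc (j + 1) T, (prodSlice H (j + 1) t)ᵀ *ᵥ X (j + 1) := by
    rw [hBi (j + 1) hi hiT, sum_Icc_succ_top (by omega), add_assoc,
      add_sum_Icc_succ_prodSlice_transpose_mulVec H hiT]
  have hterm : ∀ t ∈ Icc (j + 1) T,
      (prodSlice H j t)ᵀ *ᵥ X j = (prodSlice H (j + 1) t)ᵀ *ᵥ ((H j)ᵀ *ᵥ X j) := fun t ht =>
    prodSlice_transpose_mulVec H (by simp at ht; omega) (X j)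
  rw [hB_cur, hB_prev, sum_congr rfl hterm, add_sub_add_left_eq_sub, ← sum_sub_distrib]
  simp only [mulVec_sub]

/-- Difference sequence of the Doob martingale: with
`B i = Σ_{t=1}^{i} X t + Σ_{t=i+1}^{T} (H_{i:t})ᵀ X i` for `1 ≤ i ≤ T` and
`B 0 = Σ_{t=1}^{T} (H_{0:t})ᵀ X 0`, one has
`B i - B (i-1) = Σ_{t=i}^{T} (H_{i:t})ᵀ (X i - (H (i-1))ᵀ X (i-1))`. -/
theorem doob_martingale_difference {S : Type*} [Fintype S] [DecidableEq S] [Nonempty S]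
    (T : ℕ) (hT : 1 ≤ T)
    (X : ℕ → S → ℝ)
    (hXnonneg : ∀ t, t ≤ T → ∀ s, 0 ≤ X t s)
    (hXsum : ∀ t, t ≤ T → ∑ s, X t s = 1)
    (H : ℕ → Matrix S S ℝ)
    (hnonneg : ∀ t, t < T → ∀ s s', 0 ≤ H t s s')
    (hrowsum : ∀ t, t < T → ∀ s, ∑ s', H t s s' = 1)
    (B : ℕ → S → ℝ)
    (hB0 : B 0 = ∑ t ∈ Finset.Icc 1 T, ((prodSlice H 0 t)ᵀ).mulVec (X 0))
    (hBi : ∀ i, 1 ≤ i → i ≤ T →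
      B i = (∑ t ∈ Finset.Icc 1 i, X t)
        + ∑ t ∈ Finset.Icc (i + 1) T, ((prodSlice H i t)ᵀ).mulVec (X i)) :
    ∀ i, 1 ≤ i → i ≤ T →
      B i - B (i - 1)
        = ∑ t ∈ Finset.Icc i T,
            ((prodSlice H i t)ᵀ).mulVec (X i - (H (i - 1))ᵀ.mulVec (X (i - 1))) :=
  doob_martingale_difference_general T X H B hB0 hBi
end

section
/- Let S be a finite nonempty set, let H be a row-stochastic matrix on S with ergodicity coefficient at most γ where 0 ≤ γ < 1, let ν be a stationary distribution of H (a distribution vector with Hᵀ ν = ν), and let r : S → ℝ satisfy |r(s)| ≤ 1 for all s. Set J = Σ_s ν_s r(s). Then for every s ∈ S the series Q(s) = Σ_{i=0}^{∞} ((H^i r)(s) − J) converges absolutely, and Q satisfies the Bellman equation Q(s) = r(s) − J + Σ_{s'} H_{s,s'} Q(s') for every s ∈ S. -/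
open Finset Matrix BigOperators

/-!
Write `e_s` for the indicator vector of `s`. Stationarity of `ν` gives
`(Hⁱ r)(s) - J = ((Hᵀ)ⁱ (e_s - ν)) ⬝ r`, and `e_s - ν` sums to zero. Since `Hᵀ` preserves
coordinate sums, the ergodicity coefficient contracts the `ℓ¹`-norm of `(Hᵀ)ⁱ (e_s - ν)` by `γⁱ`,
so the terms of the series are dominated by a geometric sequence. The Bellman equation is the
first step of the series: the deviations satisfy `aᵢ₊₁ = H aᵢ` because `H` fixes constants, and
multiplication by `H` commutes with the convergent sum.
-/

namespace Matrix

variable {S : Type*} [Fintype S]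

theorem mulVec_one_eq_one_of_sum_row {H : Matrix S S ℝ} (hrow : ∀ s, ∑ s', H s s' = 1) :
    H *ᵥ 1 = 1 := by
  ext s
  simp [mulVec, dotProduct, hrow]

theorem mulVec_sub_const_of_mulVec_one {H : Matrix S S ℝ} (hH : H *ᵥ 1 = 1) (v : S → ℝ)
    (c : ℝ) : (H *ᵥ fun s => v s - c) = fun s => (H *ᵥ v) s - c := by
  have hconst : (fun s => v s - c) = v - c • 1 := by ext; simp
  ext s
  simp [hconst, mulVec_sub, mulVec_smul, hH]

theorem sum_transpose_mulVec_of_mulVec_one {H : Matrix S S ℝ} (hH : H *ᵥ 1 = 1)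
    (z : S → ℝ) : ∑ s, (Hᵀ *ᵥ z) s = ∑ s, z s := by
  rw [← dotProduct_one, mulVec_transpose, ← dotProduct_mulVec, hH, dotProduct_one]

theorem abs_dotProduct_le (x r : S → ℝ) : |x ⬝ᵥ r| ≤ (∑ s, |x s|) * ‖r‖ := by
  calc |x ⬝ᵥ r| ≤ ∑ s, |x s * r s| := abs_sum_le_sum_abs _ _
    _ ≤ ∑ s, |x s| * ‖r‖ := by
        gcongr with s
        rw [abs_mul, ← Real.norm_eq_abs (r s)]
        exact mul_le_mul_of_nonneg_left (norm_le_pi_norm r s) (abs_nonneg _)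
    _ = (∑ s, |x s|) * ‖r‖ := (sum_mul _ _ _).symm

variable [DecidableEq S]

theorem pow_mulVec_eq_self {A : Matrix S S ℝ} {v : S → ℝ} (hv : A *ᵥ v = v) (i : ℕ) :
    (A ^ i) *ᵥ v = v := by
  induction i with
  | zero => exact one_mulVec v
  | succ i ih => rw [pow_succ, ← mulVec_mulVec, hv, ih]

theorem sum_abs_pow_mulVec_le {A : Matrix S S ℝ} {γ : ℝ} (hγ : 0 ≤ γ)
    (hsum : ∀ z : S → ℝ, ∑ s, (A *ᵥ z) s = ∑ s, z s)
    (hA : ∀ z : S → ℝ, ∑ s, z s = 0 → ∑ s, |(A *ᵥ z) s| ≤ γ * ∑ s, |z s|)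
    (i : ℕ) {z : S → ℝ} (hz : ∑ s, z s = 0) :
    ∑ s, |((A ^ i) *ᵥ z) s| ≤ γ ^ i * ∑ s, |z s| := by
  induction i generalizing z with
  | zero => simp
  | succ i ih =>
    calc ∑ s, |((A ^ (i + 1)) *ᵥ z) s| = ∑ s, |((A ^ i) *ᵥ (A *ᵥ z)) s| := by
          rw [pow_succ, mulVec_mulVec]
      _ ≤ γ ^ i * ∑ s, |(A *ᵥ z) s| := ih (by rw [hsum, hz])
      _ ≤ γ ^ i * (γ * ∑ s, |z s|) := by gcongr; exact hA z hz
      _ = γ ^ (i + 1) * ∑ s, |z s| := by ring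

theorem summable_abs_pow_mulVec_dotProduct {A : Matrix S S ℝ} {γ : ℝ} (hγ0 : 0 ≤ γ)
    (hγ1 : γ < 1) (hsum : ∀ z : S → ℝ, ∑ s, (A *ᵥ z) s = ∑ s, z s)
    (hA : ∀ z : S → ℝ, ∑ s, z s = 0 → ∑ s, |(A *ᵥ z) s| ≤ γ * ∑ s, |z s|)
    {z : S → ℝ} (hz : ∑ s, z s = 0) (r : S → ℝ) :
    Summable fun i : ℕ => |((A ^ i) *ᵥ z) ⬝ᵥ r| := by
  refine .of_nonneg_of_le (fun _ => abs_nonneg _) (fun i => ?_)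
    ((summable_geometric_of_lt_one hγ0 hγ1).mul_left ((∑ s, |z s|) * ‖r‖))
  calc |((A ^ i) *ᵥ z) ⬝ᵥ r| ≤ (∑ s, |((A ^ i) *ᵥ z) s|) * ‖r‖ := abs_dotProduct_le _ _
    _ ≤ (γ ^ i * ∑ s, |z s|) * ‖r‖ := by
        gcongr; exact sum_abs_pow_mulVec_le hγ0 hsum hA i hz
    _ = (∑ s, |z s|) * ‖r‖ * γ ^ i := by ring

theorem pow_mulVec_apply_sub_dotProduct {H : Matrix S S ℝ} {ν : S → ℝ} (hν : Hᵀ *ᵥ ν = ν)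
    (r : S → ℝ) (i : ℕ) (s : S) :
    ((H ^ i) *ᵥ r) s - ν ⬝ᵥ r = ((Hᵀ ^ i) *ᵥ (Pi.single s 1 - ν)) ⬝ᵥ r := by
  rw [mulVec_sub, pow_mulVec_eq_self hν, sub_dotProduct, ← transpose_pow, mulVec_transpose,
    ← dotProduct_mulVec, single_one_dotProduct]

end Matrix

theorem tsum_apply_eq_add_mulVec_tsum {S : Type*} [Fintype S] (H : Matrix S S ℝ)
    {a : ℕ → S → ℝ} (ha : ∀ s, Summable fun i => a i s) (hrec : ∀ i, a (i + 1) = H *ᵥ a i)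
    (s : S) : ∑' i, a i s = a 0 s + ∑ s', H s s' * ∑' i, a i s' := by
  rw [(ha s).tsum_eq_zero_add]
  congr 1
  calc ∑' i, a (i + 1) s = ∑' i, ∑ s', H s s' * a i s' := by simp only [hrec]; rfl
    _ = ∑ s', ∑' i, H s s' * a i s' := Summable.tsum_finsetSum fun s' _ => (ha s').mul_left _
    _ = ∑ s', H s s' * ∑' i, a i s' := by simp only [tsum_mul_left]

theorem value_function_series_bellman_general {S : Type*} [Fintype S] [DecidableEq S]
    (H : Matrix S S ℝ) (γ : ℝ) (hγ0 : 0 ≤ γ) (hγ1 : γ < 1)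
    (hrowsum : ∀ s, ∑ s', H s s' = 1)
    (herg : ∀ z : S → ℝ, (∑ s, z s) = 0 →
      ∑ s, |Hᵀ.mulVec z s| ≤ γ * ∑ s, |z s|)
    (ν : S → ℝ) (hνsum : ∑ s, ν s = 1)
    (hstat : Hᵀ.mulVec ν = ν)
    (r : S → ℝ)
    (J : ℝ) (hJ : J = ∑ s, ν s * r s) :
    (∀ s, Summable (fun i : ℕ => |((H ^ i).mulVec r) s - J|))
      ∧ (∀ s, (∑' i : ℕ, (((H ^ i).mulVec r) s - J))
          = r s - J + ∑ s', H s s' * (∑' i : ℕ, (((H ^ i).mulVec r) s' - J))) := by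
  have hH1 := mulVec_one_eq_one_of_sum_row hrowsum
  have hdev : ∀ i s, ((H ^ i) *ᵥ r) s - J = ((Hᵀ ^ i) *ᵥ (Pi.single s 1 - ν)) ⬝ᵥ r :=
    fun i s => hJ ▸ pow_mulVec_apply_sub_dotProduct hstat r i s
  have hsummable : ∀ s, Summable fun i : ℕ => |((H ^ i) *ᵥ r) s - J| := fun s => by
    simpa only [hdev] using summable_abs_pow_mulVec_dotProduct hγ0 hγ1
      (sum_transpose_mulVec_of_mulVec_one hH1) herg (z := Pi.single s 1 - ν)
      (by simp [hνsum]) r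
  refine ⟨hsummable, fun s => ?_⟩
  have hrec : ∀ i, (fun s => ((H ^ (i + 1)) *ᵥ r) s - J) = H *ᵥ fun s => ((H ^ i) *ᵥ r) s - J :=
    fun i => by rw [mulVec_sub_const_of_mulVec_one hH1, mulVec_mulVec, ← pow_succ']
  simpa using tsum_apply_eq_add_mulVec_tsum H (fun s => (hsummable s).of_abs) hrec s

/-- The differential value function `Q(s) = Σ_{i=0}^∞ ((H^i r)(s) - J)` is well defined
(the series converges absolutely) and satisfies the Bellman equation
`Q(s) = r(s) - J + Σ_{s'} H s s' * Q(s')`. -/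
theorem value_function_series_bellman {S : Type*} [Fintype S] [DecidableEq S] [Nonempty S]
    (H : Matrix S S ℝ) (γ : ℝ) (hγ0 : 0 ≤ γ) (hγ1 : γ < 1)
    (hnonneg : ∀ s s', 0 ≤ H s s')
    (hrowsum : ∀ s, ∑ s', H s s' = 1)
    (herg : ∀ z : S → ℝ, (∑ s, z s) = 0 →
      ∑ s, |Hᵀ.mulVec z s| ≤ γ * ∑ s, |z s|)
    (ν : S → ℝ) (hνnonneg : ∀ s, 0 ≤ ν s) (hνsum : ∑ s, ν s = 1)
    (hstat : Hᵀ.mulVec ν = ν)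
    (r : S → ℝ) (hr : ∀ s, |r s| ≤ 1)
    (J : ℝ) (hJ : J = ∑ s, ν s * r s) :
    (∀ s, Summable (fun i : ℕ => |((H ^ i).mulVec r) s - J|))
      ∧ (∀ s, (∑' i : ℕ, (((H ^ i).mulVec r) s - J))
          = r s - J + ∑ s', H s s' * (∑' i : ℕ, (((H ^ i).mulVec r) s' - J))) :=
  value_function_series_bellman_general H γ hγ0 hγ1 hrowsum herg ν hνsum hstat r J hJ
end

section
/- Let A be a finite nonempty set, let w : A → ℝ and q : A → ℝ, and let η > 0. Define the probability distributions p(a) = exp(w(a)) / Σ_{a'} exp(w(a')) and p'(a) = exp(w(a) + η q(a)) / Σ_{a'} exp(w(a') + η q(a')). Then Σ_{a ∈ A} |p'(a) − p(a)| ≤ η · max_{a ∈ A} |q(a)|. -/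
open Finset BigOperators

/-!
Follow the path `p_t = softmax (w + t q)` for `t ∈ [0, η]`. Its velocity is
`p_t a (q a - 𝔼_{p_t} q)`, whose `ℓ¹` norm is the mean absolute deviation of `q` under `p_t`;
by Jensen this is at most the standard deviation, hence at most `max |q|`. The `ℓ¹` mean value
inequality then gives the bound `η max |q|`.
-/

theorem sum_abs_sub_le_of_hasDerivAt {ι : Type*} [Fintype ι] {f f' : ℝ → ι → ℝ} {a b C : ℝ}
    (hab : a ≤ b) (hf : ∀ t ∈ Set.Icc a b, ∀ i, HasDerivAt (fun s => f s i) (f' t i) t)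
    (hC : ∀ t ∈ Set.Icc a b, ∑ i, |f' t i| ≤ C) :
    ∑ i, |f b i - f a i| ≤ C * (b - a) := by
  have hlift : ∀ t ∈ Set.Icc a b,
      HasDerivWithinAt (fun s => WithLp.toLp 1 (f s)) (WithLp.toLp 1 (f' t)) (Set.Icc a b) t :=
    fun t ht => ((PiLp.continuousLinearEquiv 1 ℝ _).symm.hasFDerivAt.comp_hasDerivAt t
      (hasDerivAt_pi.mpr (hf t ht))).hasDerivWithinAt
  have hmvt := norm_image_sub_le_of_norm_deriv_le_segment' hlift
    (fun t ht => by simpa [PiLp.norm_eq_of_L1] using hC t (Set.Ico_subset_Icc_self ht))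
    b (Set.right_mem_Icc.mpr hab)
  simpa [PiLp.norm_eq_of_L1] using hmvt

theorem sum_mul_abs_sub_weighted_mean_le {ι : Type*} [Fintype ι] {p x : ι → ℝ} {M : ℝ}
    (hp : ∀ i, 0 ≤ p i) (hp1 : ∑ i, p i = 1) (hx : ∀ i, |x i| ≤ M) :
    ∑ i, p i * |x i - ∑ j, p j * x j| ≤ M := by
  set c := ∑ j, p j * x j
  have hM : 0 ≤ M := by
    obtain ⟨i, -⟩ := nonempty_of_sum_ne_zero (hp1.trans_ne one_ne_zero)
    exact (abs_nonneg _).trans (hx i)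
  have jensen : (∑ i, p i * |x i - c|) ^ 2 ≤ ∑ i, p i * (x i - c) ^ 2 := by
    simpa [sq_abs] using (even_two.convexOn_pow (𝕜 := ℝ)).map_sum_le (t := univ)
      (fun i _ => hp i) hp1 (p := fun i => |x i - c|) (fun i _ => Set.mem_univ _)
  have variance : ∑ i, p i * (x i - c) ^ 2 = ∑ i, p i * x i ^ 2 - c ^ 2 := by
    simp only [sub_sq, mul_add, mul_sub, sum_add_distrib, sum_sub_distrib]
    have hcross : ∑ i, p i * (2 * x i * c) = 2 * c ^ 2 := calc
      ∑ i, p i * (2 * x i * c) = 2 * c * c := by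
        rw [mul_sum]; exact sum_congr rfl fun i _ => by ring
      _ = 2 * c ^ 2 := by ring
    rw [hcross, ← sum_mul, hp1]
    ring
  have second_moment : ∑ i, p i * x i ^ 2 ≤ M ^ 2 := calc
    ∑ i, p i * x i ^ 2 ≤ ∑ i, p i * M ^ 2 := by
      refine sum_le_sum fun i _ => mul_le_mul_of_nonneg_left ?_ (hp i)
      exact sq_le_sq' (abs_le.mp (hx i)).1 (abs_le.mp (hx i)).2
    _ = M ^ 2 := by rw [← sum_mul, hp1, one_mul]
  refine le_of_abs_le (abs_le_of_sq_le_sq ?_ hM)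
  nlinarith [sq_nonneg c]

section Softmax

variable {A : Type*} [Fintype A]

noncomputable def softmax (v : A → ℝ) (a : A) : ℝ := Real.exp (v a) / ∑ b, Real.exp (v b)

variable [Nonempty A]

theorem sum_exp_pos (v : A → ℝ) : 0 < ∑ b, Real.exp (v b) :=
  sum_pos (fun _ _ => Real.exp_pos _) univ_nonempty

theorem softmax_nonneg (v : A → ℝ) (a : A) : 0 ≤ softmax v a :=
  div_nonneg (Real.exp_pos _).le (sum_exp_pos v).le

theorem sum_softmax (v : A → ℝ) : ∑ a, softmax v a = 1 := by
  simp only [softmax]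
  rw [← sum_div, div_self (sum_exp_pos v).ne']

theorem hasDerivAt_softmax_add_mul (v q : A → ℝ) (t : ℝ) (a : A) :
    HasDerivAt (fun s => softmax (fun b => v b + s * q b) a)
      (softmax (fun b => v b + t * q b) a *
        (q a - ∑ b, softmax (fun b => v b + t * q b) b * q b)) t := by
  have hexp : ∀ b, HasDerivAt (fun s => Real.exp (v b + s * q b))
      (Real.exp (v b + t * q b) * q b) t := fun b => by
    simpa using (((hasDerivAt_id t).mul_const (q b)).const_add (v b)).exp
  have hZ := HasDerivAt.fun_sum (u := univ) fun b _ => hexp b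
  refine ((hexp a).div hZ (sum_exp_pos _).ne').congr_deriv ?_
  simp only [softmax, div_mul_eq_mul_div, ← sum_div]
  field_simp

end Softmax

/-- Stability of exponential weights: the softmax distributions of `w` and `w + η q`
differ in `ℓ₁` distance by at most `η max_a |q a|`. -/
theorem exp_weights_stability {A : Type*} [Fintype A] [Nonempty A]
    (w q : A → ℝ) (η : ℝ) (hη : 0 < η) :
    ∑ a, |Real.exp (w a + η * q a) / (∑ a', Real.exp (w a' + η * q a'))
          - Real.exp (w a) / (∑ a', Real.exp (w a'))|
      ≤ η * Finset.univ.sup' Finset.univ_nonempty (fun a => |q a|) := by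
  set M := univ.sup' univ_nonempty fun a => |q a|
  have hqM : ∀ a, |q a| ≤ M := fun a => le_sup' (fun a => |q a|) (mem_univ a)
  have hpath := sum_abs_sub_le_of_hasDerivAt (f := fun t => softmax fun b => w b + t * q b)
    (C := M) hη.le (fun t _ a => hasDerivAt_softmax_add_mul w q t a) fun t _ => by
      simpa only [abs_mul, abs_of_nonneg (softmax_nonneg _ _)] using
        sum_mul_abs_sub_weighted_mean_le (softmax_nonneg _) (sum_softmax _) hqM
  simpa only [softmax, zero_mul, add_zero, sub_zero, mul_comm M] using hpath
end

section
/- Let S be a finite nonempty set and n ≥ 1. Let p₁ be a probability distribution on S and, for j = 2, …, n, let K_j : S → (probability distributions on S) be transition kernels. Define the joint distribution P on S^n by P(x₁, …, x_n) = p₁(x₁) · Π_{j=2}^{n} K_j(x_{j−1})(x_j), and let q_j denote the j-th marginal of P, i.e., q_j(y) = Σ_{x : x_j = y} P(x). Suppose there is β ≥ 0 such that Σ_{y ∈ S} |K_j(x)(y) − q_j(y)| ≤ β for every j ∈ {2, …, n} and every x ∈ S. Then Σ_{x ∈ S^n} | P(x) − Π_{j=1}^{n} q_j(x_j) | ≤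 (n − 1) β. -/
/-!
Induct on the number of transitions, splitting off the last coordinate: writing a point of
`S^(m+2)` as `(x, s)`, the joint density is `P' x · K(x_last, s)` and the product of marginals is
`Q' x · q(s)`, where `P'` is the chain with the last transition removed and `Q'` the product of
its marginals (removing the last transition does not change the earlier marginals). From
`P' K - Q' q = P' (K - q) + (P' - Q') q`, the new `ℓ₁` distance is at most `β` plus the old one.
-/

open Finset

section

variable {S : Type*}

theorem Fin.prod_univ_snoc {M : Type*} [CommMonoid M] {n : ℕ} (f : Fin (n + 1) → S → M)
    (x : Fin n → S) (s : S) :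
    ∏ j, f j ((Fin.snoc x s : Fin (n + 1) → S) j) =
      (∏ j : Fin n, f j.castSucc (x j)) * f (Fin.last n) s := by
  simp [Fin.prod_univ_castSucc]

section Sums

variable [Fintype S]

theorem Fin.sum_univ_pi_snoc {M : Type*} [AddCommMonoid M] {n : ℕ} (f : (Fin (n + 1) → S) → M) :
    ∑ x, f x = ∑ x : Fin n → S, ∑ s, f (Fin.snoc x s) := by
  rw [← (Fin.snocEquiv fun _ => S).sum_comp f, Fintype.sum_prod_type, Finset.sum_comm]
  rfl

theorem sum_sum_abs_mul_sub_mul_le {α : Type*} [Fintype α] (f g : α → ℝ) (κ : α → S → ℝ)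
    (ν : S → ℝ) (hf : 0 ≤ f) (hν : 0 ≤ ν) {ε : ℝ} (hκ : ∀ a, ∑ s, |κ a s - ν s| ≤ ε) :
    ∑ a, ∑ s, |f a * κ a s - g a * ν s| ≤ (∑ a, f a) * ε + (∑ a, |f a - g a|) * ∑ s, ν s := by
  have hpt : ∀ a s, |f a * κ a s - g a * ν s| ≤ f a * |κ a s - ν s| + |f a - g a| * ν s := by
    intro a s
    calc |f a * κ a s - g a * ν s|
        = |f a * (κ a s - ν s) + (f a - g a) * ν s| := by congr 1; ring
      _ ≤ |f a * (κ a s - ν s)| + |(f a - g a) * ν s| := abs_add_le _ _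
      _ = f a * |κ a s - ν s| + |f a - g a| * ν s := by
        rw [abs_mul, abs_mul, abs_of_nonneg (hf a), abs_of_nonneg (hν s)]
  calc ∑ a, ∑ s, |f a * κ a s - g a * ν s|
      ≤ ∑ a, (f a * ∑ s, |κ a s - ν s| + |f a - g a| * ∑ s, ν s) := by
        gcongr with a
        rw [mul_sum, mul_sum, ← sum_add_distrib]
        exact sum_le_sum fun s _ => hpt a s
    _ ≤ ∑ a, (f a * ε + |f a - g a| * ∑ s, ν s) :=
        sum_le_sum fun a _ => add_le_add_left (mul_le_mul_of_nonneg_left (hκ a) (hf a)) _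
    _ = (∑ a, f a) * ε + (∑ a, |f a - g a|) * ∑ s, ν s := by
        rw [sum_add_distrib, sum_mul, sum_mul]

end Sums

section Marginal

variable [Fintype S] [DecidableEq S]

def marginal {n : ℕ} (P : (Fin n → S) → ℝ) (j : Fin n) (y : S) : ℝ :=
  ∑ x : Fin n → S, if x j = y then P x else 0

theorem marginal_nonneg {n : ℕ} {P : (Fin n → S) → ℝ} (hP : 0 ≤ P) (j : Fin n) :
    0 ≤ marginal P j :=
  fun y => sum_nonneg fun x _ => by split_ifs; exacts [hP x, le_rfl]

theorem sum_marginal {n : ℕ} (P : (Fin n → S) → ℝ) (j : Fin n) :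
    ∑ y, marginal P j y = ∑ x, P x := by
  unfold marginal
  rw [sum_comm]
  simp

theorem marginal_castSucc_of_snoc {n : ℕ} {P : (Fin (n + 1) → S) → ℝ} {P' : (Fin n → S) → ℝ}
    {κ : (Fin n → S) → S → ℝ} (hκ : ∀ x, ∑ s, κ x s = 1)
    (hP : ∀ x s, P (Fin.snoc x s) = P' x * κ x s) (j : Fin n) :
    marginal P j.castSucc = marginal P' j := by
  funext y
  unfold marginal
  rw [Fin.sum_univ_pi_snoc]
  refine sum_congr rfl fun x _ => ?_
  simp only [Fin.snoc_castSucc, hP]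
  split_ifs
  · rw [← mul_sum, hκ, mul_one]
  · exact sum_const_zero

end Marginal

section MarkovChain

def chainDensity (p₁ : S → ℝ) {m : ℕ} (K : Fin m → S → S → ℝ) (x : Fin (m + 1) → S) : ℝ :=
  p₁ (x 0) * ∏ j : Fin m, K j (x j.castSucc) (x j.succ)

variable {p₁ : S → ℝ}

theorem chainDensity_nonneg (hp₁ : 0 ≤ p₁) {m : ℕ} {K : Fin m → S → S → ℝ}
    (hK : ∀ j s y, 0 ≤ K j s y) : 0 ≤ chainDensity p₁ K :=
  fun _ => mul_nonneg (hp₁ _) (prod_nonneg fun _ _ => hK _ _ _)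

theorem chainDensity_snoc {m : ℕ} (K : Fin (m + 1) → S → S → ℝ) (x : Fin (m + 1) → S) (s : S) :
    chainDensity p₁ K (Fin.snoc x s) =
      chainDensity p₁ (fun j => K j.castSucc) x * K (Fin.last m) (x (Fin.last m)) s := by
  have h0 : (Fin.snoc x s : Fin (m + 2) → S) 0 = x 0 := Fin.snoc_castSucc (i := 0) ..
  rw [chainDensity, chainDensity, h0, Fin.prod_univ_castSucc, mul_assoc]
  simp only [Fin.snoc_castSucc, ← Fin.castSucc_succ, Fin.succ_last, Fin.snoc_last]

variable [Fintype S]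

theorem sum_chainDensity (hp₁ : ∑ s, p₁ s = 1) :
    ∀ {m : ℕ} {K : Fin m → S → S → ℝ}, (∀ j s, ∑ y, K j s y = 1) →
      ∑ x, chainDensity p₁ K x = 1
  | 0, K, _ => by
    rw [← (Equiv.funUnique (Fin 1) S).symm.sum_comp]
    simpa [chainDensity] using hp₁
  | m + 1, K, hK => by
    rw [Fin.sum_univ_pi_snoc]
    simp only [chainDensity_snoc, ← mul_sum, hK, mul_one]
    exact sum_chainDensity hp₁ fun j => hK j.castSucc

variable [DecidableEq S]

theorem sum_abs_chainDensity_sub_prod_marginal_le (hp₁ : 0 ≤ p₁) (hp₁_sum : ∑ s, p₁ s = 1)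
    {β : ℝ} : ∀ {m : ℕ} {K : Fin m → S → S → ℝ}, (∀ j s y, 0 ≤ K j s y) →
      (∀ j s, ∑ y, K j s y = 1) →
      (∀ j s, ∑ y, |K j s y - marginal (chainDensity p₁ K) j.succ y| ≤ β) →
      ∑ x, |chainDensity p₁ K x - ∏ j, marginal (chainDensity p₁ K) j (x j)| ≤ m * β
  | 0, K, _, _, _ => by
    have hmarg : marginal (chainDensity p₁ K) 0 = p₁ := by
      funext y
      rw [marginal, ← (Equiv.funUnique (Fin 1) S).symm.sum_comp]
      simp [chainDensity]
    simp [chainDensity, hmarg]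
  | m + 1, K, hK_nonneg, hK_sum, hclose => by
    set P := chainDensity p₁ K
    set P' := chainDensity p₁ fun j => K j.castSucc
    set ν := marginal P (Fin.last (m + 1))
    have hmarg : ∀ j, marginal P j.castSucc = marginal P' j :=
      marginal_castSucc_of_snoc (fun x => hK_sum _ _) (chainDensity_snoc K)
    have ih : ∑ x, |P' x - ∏ j, marginal P' j (x j)| ≤ m * β := by
      refine sum_abs_chainDensity_sub_prod_marginal_le hp₁ hp₁_sum (fun j => hK_nonneg _)
        (fun j => hK_sum _) fun j s => ?_
      have := hclose j.castSucc s
      rwa [Fin.succ_castSucc, hmarg] at this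
    have hν : ∑ s, ν s = 1 := by rw [sum_marginal, sum_chainDensity hp₁_sum hK_sum]
    calc ∑ x, |P x - ∏ j, marginal P j (x j)|
        = ∑ x, ∑ s,
            |P' x * K (Fin.last m) (x (Fin.last m)) s - (∏ j, marginal P' j (x j)) * ν s| := by
          rw [Fin.sum_univ_pi_snoc]
          simp only [P, P', chainDensity_snoc, Fin.prod_univ_snoc, hmarg, ν]
      _ ≤ (∑ x, P' x) * β + (∑ x, |P' x - ∏ j, marginal P' j (x j)|) * ∑ s, ν s := by
          refine sum_sum_abs_mul_sub_mul_le _ _ _ _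
            (chainDensity_nonneg hp₁ fun _ => hK_nonneg _)
            (marginal_nonneg (chainDensity_nonneg hp₁ hK_nonneg) _) fun x => ?_
          simpa [Fin.succ_last] using hclose (Fin.last m) (x (Fin.last m))
      _ ≤ ((m + 1 : ℕ) : ℝ) * β := by
          rw [sum_chainDensity hp₁_sum fun j => hK_sum _, hν]
          push_cast
          linarith

end MarkovChain

end

theorem independent_blocks_bound_general {S : Type*} [Fintype S] [DecidableEq S]
    (m : ℕ)
    (p1 : S → ℝ) (hp1_nonneg : ∀ s, 0 ≤ p1 s) (hp1_sum : ∑ s, p1 s = 1)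
    (K : Fin m → S → S → ℝ)
    (hK_nonneg : ∀ j s y, 0 ≤ K j s y) (hK_sum : ∀ j s, ∑ y, K j s y = 1)
    (P : (Fin (m + 1) → S) → ℝ)
    (hP : ∀ x : Fin (m + 1) → S, P x = p1 (x 0) * ∏ j : Fin m, K j (x j.castSucc) (x j.succ))
    (q : Fin (m + 1) → S → ℝ)
    (hq : ∀ j y, q j y = ∑ x : Fin (m + 1) → S, if x j = y then P x else 0)
    (β : ℝ)
    (hclose : ∀ j : Fin m, ∀ s : S, ∑ y, |K j s y - q j.succ y| ≤ β) :
    ∑ x : Fin (m + 1) → S, |P x - ∏ j, q j (x j)| ≤ m * β := by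
  obtain rfl : P = chainDensity p1 K := funext hP
  obtain rfl : q = marginal (chainDensity p1 K) := funext fun j => funext (hq j)
  exact sum_abs_chainDensity_sub_prod_marginal_le hp1_nonneg hp1_sum hK_nonneg hK_sum hclose

/-- Independent blocks (Yu, 1994): a Markov-structured joint distribution over `m + 1`
coordinates whose conditional kernels are uniformly within `β` (in `ℓ₁`) of the
corresponding marginals differs from the product of its marginals by at most `m β` in
`ℓ₁`. Here the number of coordinates is `n = m + 1`, so the bound is `(n - 1) β`. -/
theorem independent_blocks_bound {S : Type*} [Fintype S] [DecidableEq S] [Nonempty S]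
    (m : ℕ)
    (p1 : S → ℝ) (hp1_nonneg : ∀ s, 0 ≤ p1 s) (hp1_sum : ∑ s, p1 s = 1)
    (K : Fin m → S → S → ℝ)
    (hK_nonneg : ∀ j s y, 0 ≤ K j s y) (hK_sum : ∀ j s, ∑ y, K j s y = 1)
    (P : (Fin (m + 1) → S) → ℝ)
    (hP : ∀ x : Fin (m + 1) → S, P x = p1 (x 0) * ∏ j : Fin m, K j (x j.castSucc) (x j.succ))
    (q : Fin (m + 1) → S → ℝ)
    (hq : ∀ j y, q j y = ∑ x : Fin (m + 1) → S, if x j = y then P x else 0)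
    (β : ℝ) (hβ : 0 ≤ β)
    (hclose : ∀ j : Fin m, ∀ s : S, ∑ y, |K j s y - q j.succ y| ≤ β) :
    ∑ x : Fin (m + 1) → S, |P x - ∏ j, q j (x j)| ≤ m * β :=
  independent_blocks_bound_general m p1 hp1_nonneg hp1_sum K hK_nonneg hK_sum P hP q hq β hclose
end
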